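/- The quotient space X_S = S³ / ι is homeomorphic to Susp(ℝP²), the unreduced suspension of the real projective plane. -/

import Mathlib

/-- The unit 3-sphere in `EuclideanSpace ℝ (Fin 4)`. -/
abbrev S3 : Type := ↥(Metric.sphere (0 : EuclideanSpace ℝ (Fin 4)) 1)

/-- The involution `ι(x₁, x₂, x₃, x₄) = (−x₁, −x₂, −x₃, x₄)` on the unit 3-sphere. -/
noncomputable def sphereInv (x : S3) : S3 :=
  ⟨(WithLp.toLp 2 (fun i => if i = 3 then (x : EuclideanSpace ℝ (Fin 4)) i
      else -(x : EuclideanSpace ℝ (Fin 4)) i) : EuclideanSpace ℝ (Fin 4)), by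
    have hx := x.2
    rw [mem_sphere_zero_iff_norm] at hx ⊢
    rw [EuclideanSpace.norm_eq] at hx ⊢
    simpa [apply_ite (‖·‖)] using hx⟩

/-- The quotient space `X_S = S³ / ι`, i.e. the quotient of the 3-sphere by the
equivalence relation identifying each point `p` with `ι p`, with the quotient topology. -/
abbrev XS : Type := Quot (fun p q : S3 => sphereInv p = q)

/-- The unit 2-sphere in `EuclideanSpace ℝ (Fin 3)`. -/
abbrev S2 : Type := ↥(Metric.sphere (0 : EuclideanSpace ℝ (Fin 3)) 1)

/-- The real projective plane: the quotient of the unit 2-sphere by the equivalence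
relation identifying `x` with `−x`, with the quotient topology. -/
abbrev RP2 : Type :=
  Quot (fun x y : S2 => (y : EuclideanSpace ℝ (Fin 3)) = -(x : EuclideanSpace ℝ (Fin 3)))

/-- The unreduced suspension of a topological space `Z`: the quotient of `Z × [0,1]`
collapsing `Z × {0}` to a point and `Z × {1}` to a point, with the quotient topology. -/
abbrev Susp (Z : Type) [TopologicalSpace Z] : Type :=
  Quot (fun a b : Z × unitInterval => (a.2 = 0 ∧ b.2 = 0) ∨ (a.2 = 1 ∧ b.2 = 1))

/-!
Write a point of `S³` as `(√(1 - h²) • v, h)` with `v ∈ S²` and height `h = 1 - 2t`,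
`t ∈ [0,1]`. The involution `ι` negates `v` and fixes `h`, and the factor `√(1 - h²)` forgets `v`
exactly at the poles `t = 0, 1`. Hence `(v, t) ↦ [(√(1 - h²) • v, h)]` descends to a continuous
bijection `Susp ℝP² → S³/ι`. It is a closed map because `S² × [0,1]` is compact and the quotient
map of an involution is closed (the saturation of `C` is `C ∪ ι⁻¹ C`), so it is a homeomorphism.
-/

open Function Set Topology Metric EuclideanSpace unitInterval

section InvolutionQuotient

variable {α : Type*} {r : α → α → Prop} {f : α → α}

theorem quot_mk_eq_iff_of_involutive (hf : Involutive f) (hr : ∀ x y, r x y ↔ f x = y)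
    {x y : α} : Quot.mk r x = Quot.mk r y ↔ y = x ∨ y = f x := by
  refine ⟨fun h => ?_, ?_⟩
  · replace h := Quot.eqvGen_exact h
    induction h with
    | rel x y hxy => exact .inr ((hr x y).1 hxy).symm
    | refl => exact .inl rfl
    | symm x y _ ih => rcases ih with rfl | rfl <;> simp [hf x]
    | trans x y z _ _ ihxy ihyz =>
      rcases ihxy with rfl | rfl <;> rcases ihyz with rfl | rfl <;> simp [hf x]
  · rintro (rfl | rfl)
    exacts [rfl, Quot.sound ((hr _ _).2 rfl)]

theorem preimage_image_quot_mk_of_involutive (hf : Involutive f) (hr : ∀ x y, r x y ↔ f x = y)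
    (s : Set α) : Quot.mk r ⁻¹' (Quot.mk r '' s) = s ∪ f ⁻¹' s := by
  ext z
  simp only [mem_preimage, mem_image, quot_mk_eq_iff_of_involutive hf hr, mem_union]
  constructor
  · rintro ⟨x, hx, rfl | rfl⟩
    exacts [.inl hx, .inr ((hf x).symm ▸ hx)]
  · rintro (hz | hz)
    exacts [⟨z, hz, .inl rfl⟩, ⟨f z, hz, .inr (hf z).symm⟩]

variable [TopologicalSpace α]

theorem isOpenMap_quot_mk_of_involutive (hf : Involutive f) (hc : Continuous f)
    (hr : ∀ x y, r x y ↔ f x = y) : IsOpenMap (Quot.mk r) := fun U hU => by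
  rw [← isQuotientMap_quot_mk.isOpen_preimage, preimage_image_quot_mk_of_involutive hf hr]
  exact hU.union (hU.preimage hc)

theorem isClosedMap_quot_mk_of_involutive (hf : Involutive f) (hc : Continuous f)
    (hr : ∀ x y, r x y ↔ f x = y) : IsClosedMap (Quot.mk r) := fun C hC => by
  rw [← isQuotientMap_quot_mk.isClosed_preimage, preimage_image_quot_mk_of_involutive hf hr]
  exact hC.union (hC.preimage hc)

end InvolutionQuotient

namespace EuclideanSpace

variable {n : ℕ}

noncomputable def snoc (x : EuclideanSpace ℝ (Fin n)) (a : ℝ) : EuclideanSpace ℝ (Fin (n + 1)) :=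
  WithLp.toLp 2 (Fin.snoc (α := fun _ => ℝ) x.ofLp a)

@[simp]
theorem snoc_apply_castSucc (x : EuclideanSpace ℝ (Fin n)) (a : ℝ) (i : Fin n) :
    snoc x a i.castSucc = x i :=
  Fin.snoc_castSucc (α := fun _ => ℝ) ..

@[simp]
theorem snoc_apply_last (x : EuclideanSpace ℝ (Fin n)) (a : ℝ) : snoc x a (Fin.last n) = a :=
  Fin.snoc_last (α := fun _ => ℝ) ..

theorem snoc_inj {x y : EuclideanSpace ℝ (Fin n)} {a b : ℝ} :
    snoc x a = snoc y b ↔ x = y ∧ a = b := by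
  rw [snoc, snoc, (WithLp.toLp_injective 2).eq_iff, (Fin.snoc_injective2 (α := fun _ => ℝ)).eq_iff,
    (WithLp.ofLp_injective 2).eq_iff]

theorem exists_snoc_eq (z : EuclideanSpace ℝ (Fin (n + 1))) :
    ∃ x a, snoc x a = z :=
  ⟨WithLp.toLp 2 (Fin.init z.ofLp), z (Fin.last n), by simp [snoc]⟩

theorem norm_sq_snoc (x : EuclideanSpace ℝ (Fin n)) (a : ℝ) :
    ‖snoc x a‖ ^ 2 = ‖x‖ ^ 2 + a ^ 2 := by
  simp [EuclideanSpace.norm_sq_eq, Fin.sum_univ_castSucc]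

theorem continuous_snoc : Continuous fun p : EuclideanSpace ℝ (Fin n) × ℝ => snoc p.1 p.2 :=
  (PiLp.continuous_toLp 2 _).comp <|
    ((PiLp.continuous_ofLp 2 (fun _ : Fin n => ℝ)).comp continuous_fst).finSnoc continuous_snd

end EuclideanSpace

theorem exists_mem_sphere_norm_smul_eq {E : Type*} [NormedAddCommGroup E] [NormedSpace ℝ E]
    [Nontrivial E] (x : E) : ∃ v ∈ sphere (0 : E) 1, ‖x‖ • v = x := by
  rcases eq_or_ne x 0 with rfl | hx
  · obtain ⟨v, hv⟩ := (NormedSpace.sphere_nonempty (x := (0 : E))).2 zero_le_one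
    exact ⟨v, hv, by simp⟩
  · exact ⟨‖x‖⁻¹ • x, mem_sphere_zero_iff_norm.2 (norm_smul_inv_norm (𝕜 := ℝ) hx),
      by simp [smul_smul, hx]⟩

namespace SphereSuspension

noncomputable def height (t : I) : ℝ := 1 - 2 * t

noncomputable def radius (t : I) : ℝ := √(1 - height t ^ 2)

theorem height_sq_le_one (t : I) : height t ^ 2 ≤ 1 := by
  have := t.2.1; have := t.2.2; unfold height; nlinarith

theorem radius_sq (t : I) : radius t ^ 2 = 1 - height t ^ 2 :=
  Real.sq_sqrt (sub_nonneg.2 (height_sq_le_one t))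

theorem height_injective : Injective height := fun t s h =>
  Subtype.ext (by unfold height at h; linarith)

theorem radius_eq_zero_iff {t : I} : radius t = 0 ↔ t = 0 ∨ t = 1 := by
  rw [radius, Real.sqrt_eq_zero (sub_nonneg.2 (height_sq_le_one t)), sub_eq_zero, eq_comm,
    sq_eq_one_iff, height, Subtype.ext_iff, Subtype.ext_iff]
  constructor <;> rintro (h | h) <;> [left; right; left; right] <;> push_cast at * <;> linarith

theorem continuous_height : Continuous height := by unfold height; fun_prop

theorem continuous_radius : Continuous radius :=
  Real.continuous_sqrt.comp (continuous_const.sub (continuous_height.pow 2))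

end SphereSuspension

open SphereSuspension

section SuspensionToSphere

variable {n : ℕ}

noncomputable def suspensionToSphere (v : sphere (0 : EuclideanSpace ℝ (Fin n)) 1) (t : I) :
    sphere (0 : EuclideanSpace ℝ (Fin (n + 1))) 1 :=
  ⟨snoc (radius t • (v : EuclideanSpace ℝ (Fin n))) (height t), by
    rw [mem_sphere_zero_iff_norm, ← pow_eq_one_iff_of_nonneg (norm_nonneg _) two_ne_zero,
      norm_sq_snoc, norm_smul, mul_pow, norm_eq_of_mem_sphere v, Real.norm_eq_abs, sq_abs,
      radius_sq]
    ring⟩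

@[simp]
theorem coe_suspensionToSphere (v : sphere (0 : EuclideanSpace ℝ (Fin n)) 1) (t : I) :
    (suspensionToSphere v t : EuclideanSpace ℝ (Fin (n + 1))) =
      snoc (radius t • (v : EuclideanSpace ℝ (Fin n))) (height t) :=
  rfl

theorem continuous_suspensionToSphere :
    Continuous (uncurry (suspensionToSphere (n := n))) :=
  continuous_snoc.comp ((continuous_radius.comp continuous_snd).smul
    (continuous_subtype_val.comp continuous_fst) |>.prodMk (continuous_height.comp continuous_snd))
    |>.subtype_mk _

theorem suspensionToSphere_eq_iff {v w : sphere (0 : EuclideanSpace ℝ (Fin n)) 1} {t s : I} :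
    suspensionToSphere v t = suspensionToSphere w s ↔ t = s ∧ (t = 0 ∨ t = 1 ∨ v = w) := by
  rw [Subtype.ext_iff, coe_suspensionToSphere, coe_suspensionToSphere, snoc_inj,
    height_injective.eq_iff, ← or_assoc, ← radius_eq_zero_iff, Subtype.ext_iff (a1 := v), and_comm]
  refine and_congr_right fun hts => ?_
  rw [hts, ← sub_eq_zero, ← smul_sub, smul_eq_zero, sub_eq_zero]

theorem suspensionToSphere_surjective [NeZero n] :
    Surjective (uncurry (suspensionToSphere (n := n))) := by
  rintro ⟨z, hz⟩
  obtain ⟨x, a, rfl⟩ := exists_snoc_eq z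
  have hxa : ‖x‖ ^ 2 + a ^ 2 = 1 := by
    rw [← norm_sq_snoc, norm_eq_of_mem_sphere ⟨_, hz⟩, one_pow]
  obtain ⟨v, hv, hxv⟩ := exists_mem_sphere_norm_smul_eq x
  let t : I := ⟨(1 - a) / 2, by constructor <;> nlinarith [norm_nonneg x]⟩
  have ht : height t = a := by simp only [height, t]; ring
  have hr : radius t = ‖x‖ := by
    rw [radius, ht, ← hxa, add_sub_cancel_right, Real.sqrt_sq (norm_nonneg x)]
  exact ⟨(⟨v, hv⟩, t), Subtype.ext (by simp [ht, hr, hxv])⟩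

end SuspensionToSphere

theorem sphereInv_involutive : Involutive sphereInv := fun x =>
  Subtype.ext <| PiLp.ext fun i => by by_cases h : i = 3 <;> simp [sphereInv, h]

theorem continuous_sphereInv : Continuous sphereInv :=
  ((PiLp.continuous_toLp 2 _).comp <| continuous_pi fun i => by
    by_cases h : i = 3 <;> simp only [h, if_true, if_false] <;> fun_prop).subtype_mk _

theorem sphereInv_suspensionToSphere (v : S2) (t : I) :
    sphereInv (suspensionToSphere v t) = suspensionToSphere (-v) t :=
  Subtype.ext <| PiLp.ext fun i => by
    induction i using Fin.lastCases with
    | last =>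
      simp only [sphereInv, WithLp.ofLp_toLp]
      exact (snoc_apply_last _ _).trans (snoc_apply_last _ _).symm
    | cast j =>
      have hj : j.castSucc ≠ 3 := (Fin.castSucc_lt_last j).ne
      simp [sphereInv, hj]

theorem isOpenQuotientMap_RP2_mk : IsOpenQuotientMap (Quot.mk _ : S2 → RP2) :=
  ⟨Quot.mk_surjective, continuous_quot_mk, isOpenMap_quot_mk_of_involutive neg_involutive
    continuous_neg fun x y => by rw [eq_comm, ← coe_neg_sphere, Subtype.coe_inj]⟩

theorem xs_mk_eq_iff {x y : S3} : (Quot.mk _ x : XS) = Quot.mk _ y ↔ y = x ∨ y = sphereInv x :=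
  quot_mk_eq_iff_of_involutive sphereInv_involutive fun _ _ => Iff.rfl

noncomputable def suspRP2ToXS : Susp RP2 → XS :=
  Quot.lift
    (fun p : RP2 × I => Quot.lift (fun v : S2 => (Quot.mk _ (suspensionToSphere v p.2) : XS))
      (fun v w hvw => by
        obtain rfl : w = -v := Subtype.ext (hvw.trans (coe_neg_sphere v).symm)
        exact xs_mk_eq_iff.2 (.inr (sphereInv_suspensionToSphere v p.2).symm)) p.1)
    (by
      rintro ⟨⟨v⟩, t⟩ ⟨⟨w⟩, s⟩ (⟨rfl, rfl⟩ | ⟨rfl, rfl⟩) <;>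
      exact congrArg _ (suspensionToSphere_eq_iff.2 (by simp)))

def suspMk (p : S2 × I) : Susp RP2 := Quot.mk _ (Quot.mk _ p.1, p.2)

-- Products of quotient maps need not be quotient maps; products of open ones are.
theorem isQuotientMap_suspMk : IsQuotientMap suspMk :=
  isQuotientMap_quot_mk.comp (isOpenQuotientMap_RP2_mk.prodMap IsOpenQuotientMap.id).isQuotientMap

theorem suspRP2ToXS_comp_suspMk :
    suspRP2ToXS ∘ suspMk = Quot.mk _ ∘ uncurry suspensionToSphere :=
  rfl

theorem continuous_suspRP2ToXS : Continuous suspRP2ToXS := by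
  rw [isQuotientMap_suspMk.continuous_iff, suspRP2ToXS_comp_suspMk]
  exact continuous_quot_mk.comp continuous_suspensionToSphere

theorem isClosedMap_suspRP2ToXS : IsClosedMap suspRP2ToXS := fun C hC => by
  rw [← image_preimage_eq C isQuotientMap_suspMk.surjective, ← image_comp,
    suspRP2ToXS_comp_suspMk, image_comp]
  exact isClosedMap_quot_mk_of_involutive sphereInv_involutive continuous_sphereInv
    (fun _ _ => Iff.rfl) _ <| continuous_suspensionToSphere.isClosedMap _ <|
      hC.preimage isQuotientMap_suspMk.continuous

theorem suspRP2ToXS_surjective : Surjective suspRP2ToXS := by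
  refine Surjective.of_comp (g := suspMk) ?_
  rw [suspRP2ToXS_comp_suspMk]
  exact Quot.mk_surjective.comp suspensionToSphere_surjective

theorem suspRP2ToXS_injective : Injective suspRP2ToXS := by
  rintro ⟨⟨⟨v⟩, t⟩⟩ ⟨⟨⟨w⟩, s⟩⟩ h
  change (Quot.mk _ (suspensionToSphere v t) : XS) = Quot.mk _ (suspensionToSphere w s) at h
  rw [xs_mk_eq_iff, sphereInv_suspensionToSphere, suspensionToSphere_eq_iff,
    suspensionToSphere_eq_iff] at h
  rcases h with ⟨rfl, ht | ht | rfl⟩ | ⟨rfl, ht | ht | rfl⟩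
  · exact Quot.sound (.inl ⟨ht, ht⟩)
  · exact Quot.sound (.inr ⟨ht, ht⟩)
  · rfl
  · exact Quot.sound (.inl ⟨ht, ht⟩)
  · exact Quot.sound (.inr ⟨ht, ht⟩)
  · exact congrArg (fun p => Quot.mk _ (p, _)) (Quot.sound (coe_neg_sphere v))

/-- The quotient `X_S = S³ / ι` is homeomorphic to the unreduced suspension of the
real projective plane. -/
theorem XS_homeomorphic_susp_RP2 : Nonempty (XS ≃ₜ Susp RP2) :=
  ⟨((Equiv.ofBijective _ ⟨suspRP2ToXS_injective, suspRP2ToXS_surjective⟩)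
    |>.toHomeomorphOfContinuousClosed continuous_suspRP2ToXS isClosedMap_suspRP2ToXS).symm⟩
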